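/- Let e be a cellular automaton on Σ^ℤ of radius r(e). Then for all cellular automata c, d, we have δ(e ∘ c, e ∘ d) ≤ (2·r(e)+1) · δ(c,d). In particular, left composition c ↦ e ∘ c is Lipschitz continuous with respect to δ. -/

import Mathlib

open MeasureTheory Filter Function

section BasicDefs

variable {A : Type}

/-- `f` admits a local rule of radius `r`: there is `F` depending only on
coordinates in `[-r, r]` such that `f x i = F (σ^i x)`. -/
def HasRadius (r : ℕ) (f : (ℤ → A) → (ℤ → A)) : Prop :=
  ∃ F : (ℤ → A) → A,
    (∀ x y : ℤ → A, (∀ j : ℤ, |j| ≤ (r : ℤ) → x j = y j) → F x = F y) ∧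
    ∀ (x : ℤ → A) (i : ℤ), f x i = F fun j => x (i + j)

/-- A cellular automaton is a map admitting a local rule of some radius. -/
def IsCA (f : (ℤ → A) → (ℤ → A)) : Prop := ∃ r, HasRadius r f

/-- The minimal radius of a cellular automaton. -/
noncomputable def rad (f : (ℤ → A) → (ℤ → A)) : ℕ := sInf {r : ℕ | HasRadius r f}

/-- Centered words of radius `r`. -/
def Word (A : Type) (r : ℕ) := (Finset.Icc (-(r : ℤ)) (r : ℤ) : Finset ℤ) → A

/-- The difference set of `c` and `d` for radius `r`: centered words of radius `r`
on which the images of `c` and `d` differ at the central cell. -/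
def diffSet (r : ℕ) (c d : (ℤ → A) → (ℤ → A)) : Set (Word A r) :=
  {w | ∃ x : ℤ → A, (∀ j : (Finset.Icc (-(r : ℤ)) (r : ℤ) : Finset ℤ), x j.1 = w j) ∧
        c x 0 ≠ d x 0}

/-- The shift map. -/
def shift (x : ℤ → A) : ℤ → A := fun i => x (i + 1)

/-- Preimages of the centered word `v` of radius `n` under the word function of `c`
used with radius `r`: centered words `u` of radius `n + r` such that some (equivalently,
by the radius assumption, every) configuration extending `u` maps under `c` to a
configuration extending `v` in its central part. -/
def wordPreimages (c : (ℤ → A) → (ℤ → A)) (n r : ℕ) (v : Word A n) :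
    Set (Word A (n + r)) :=
  {u | ∃ x : ℤ → A,
        (∀ j : (Finset.Icc (-((n + r : ℕ) : ℤ)) ((n + r : ℕ) : ℤ) : Finset ℤ), x j.1 = u j) ∧
        ∀ j : (Finset.Icc (-(n : ℤ)) (n : ℤ) : Finset ℤ), c x j.1 = v j}

-- The Cantor metric on configurations.
open Classical in
noncomputable def dC (x y : ℤ → A) : ℝ :=
  ∑' i : ℤ, if x i ≠ y i then (2 : ℝ) ^ (-|i|) else 0

/-- The Besicovitch pseudodistance on configurations. -/
noncomputable def dB (x y : ℤ → A) : ℝ :=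
  limsup (fun n : ℕ =>
    (({i : ℤ | |i| ≤ (n : ℤ) ∧ x i ≠ y i}.ncard : ℝ)) / (2 * (n : ℝ) + 1)) atTop

end BasicDefs

section FintypeDefs

variable {A : Type} [Fintype A]

/-- The normalized size of the difference set for radius `r`. -/
noncomputable def deltaR (r : ℕ) (c d : (ℤ → A) → (ℤ → A)) : ℝ :=
  (diffSet r c d).ncard / (Fintype.card A : ℝ) ^ (2 * r + 1)

/-- The uniform Bernoulli distance between two cellular automata (computed with the
common radius `max (rad c) (rad d)`; by radius-independence this is the canonical value). -/
noncomputable def delta (c d : (ℤ → A) → (ℤ → A)) : ℝ :=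
  deltaR (max (rad c) (rad d)) c d

end FintypeDefs

section MeasureDefs

variable {A : Type} [MeasurableSpace A]

/-- The pseudometric on cellular automata induced by the measure `μ`:
the measure of the cylinder of the difference set, i.e. of the set of
configurations on which `c` and `d` differ at coordinate `0`. -/
noncomputable def deltaMu (μ : Measure (ℤ → A)) (c d : (ℤ → A) → (ℤ → A)) : ℝ :=
  (μ {x | c x 0 ≠ d x 0}).toReal

/-- `c` preserves the measure `μ`. -/
def Preserves (μ : Measure (ℤ → A)) (c : (ℤ → A) → (ℤ → A)) : Prop :=
  ∀ B : Set (ℤ → A), MeasurableSet B → μ (c ⁻¹' B) = μ B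

/-- `μ` is shift-invariant. -/
def ShiftInvariant (μ : Measure (ℤ → A)) : Prop :=
  ∀ B : Set (ℤ → A), MeasurableSet B → μ (shift ⁻¹' B) = μ B

end MeasureDefs

/-!
If `e ∘ c` and `e ∘ d` differ at the central cell of a configuration `x`, then `c x`
and `d x` already differ at some cell `j` with `|j| ≤ r(e)`. Hence every word of the difference set
of `e ∘ c` and `e ∘ d` (radius `r(e) + r`) restricts, on the window of radius `r` around one of the
`2 r(e) + 1` cells `j`, to a word of the difference set of `c` and `d`. Each such restriction
condition cuts out a proportion `δ(c, d)` of all words, so the union bound gives the factor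
`2 r(e) + 1`, provided `δ` does not depend on the radius used to compute it.
-/

section CellularAutomata

variable {A : Type} {r s : ℕ} {f g : (ℤ → A) → (ℤ → A)}

theorem HasRadius.mono (h : HasRadius r f) (hrs : r ≤ s) : HasRadius s f := by
  obtain ⟨F, hF, hloc⟩ := h
  exact ⟨F, fun x y hxy => hF x y fun j hj => hxy j (hj.trans (by exact_mod_cast hrs)), hloc⟩

theorem IsCA.hasRadius_rad (h : IsCA f) : HasRadius (rad f) f :=
  Nat.sInf_mem h

theorem HasRadius.rad_le (h : HasRadius r f) : rad f ≤ r :=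
  Nat.sInf_le h

theorem HasRadius.comp (hf : HasRadius r f) (hg : HasRadius s g) : HasRadius (r + s) (f ∘ g) := by
  obtain ⟨F, hF, hFloc⟩ := hf
  obtain ⟨G, hG, hGloc⟩ := hg
  refine ⟨fun y => F fun j => G fun k => y (j + k), fun x y hxy => ?_, fun x i => ?_⟩
  · refine hF _ _ fun j hj => hG _ _ fun k hk => hxy _ ?_
    push_cast
    exact (abs_add_le j k).trans (add_le_add hj hk)
  · simp only [Function.comp_apply, hFloc (g x) i, hGloc, add_assoc]

theorem HasRadius.apply_zero_congr (h : HasRadius r f) {x y : ℤ → A}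
    (hxy : ∀ j : ℤ, |j| ≤ (r : ℤ) → x j = y j) : f x 0 = f y 0 := by
  obtain ⟨F, hF, hloc⟩ := h
  rw [hloc x 0, hloc y 0]
  exact hF _ _ fun j hj => by simpa using hxy j hj

theorem HasRadius.apply_translate_zero (h : HasRadius r f) (x : ℤ → A) (j : ℤ) :
    f (fun m => x (j + m)) 0 = f x j := by
  obtain ⟨F, -, hloc⟩ := h
  simp only [hloc, zero_add]

end CellularAutomata

section Counting

theorem Set.ncard_preimage_comp_of_injective {α β γ : Type} [Fintype α] [Fintype β] [Fintype γ]
    {ι : γ → β} (hι : ι.Injective) (S : Set (γ → α)) :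
    ((· ∘ ι) ⁻¹' S).ncard = S.ncard * Fintype.card α ^ (Fintype.card β - Fintype.card γ) := by
  classical
  let E : (β → α) ≃ (γ → α) × ({b // b ∉ Set.range ι} → α) :=
    (Equiv.piEquivPiSubtypeProd (· ∈ Set.range ι) fun _ => α).trans
      (Equiv.prodCongr ((Equiv.ofInjective ι hι).arrowCongr (Equiv.refl α)).symm (Equiv.refl _))
  have hE : (· ∘ ι) ⁻¹' S = E ⁻¹' (S ×ˢ Set.univ) := by
    ext u
    simp [E, Equiv.arrowCongr, Function.comp_def]
  rw [hE, Set.ncard_preimage_of_injective_subset_range E.injective (by simp), Set.ncard_prod,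
    Set.ncard_univ, Nat.card_eq_fintype_card, Fintype.card_fun, Fintype.card_subtype_compl,
    Set.card_range_of_injective hι]

theorem card_coe_Icc_neg_self (r : ℕ) :
    Fintype.card (Finset.Icc (-(r : ℤ)) (r : ℤ) : Finset ℤ) = 2 * r + 1 := by
  rw [Fintype.card_coe, Int.card_Icc]
  omega

end Counting

section Words

variable {A : Type} {r R : ℕ}

instance [Finite A] : Finite (Word A r) :=
  inferInstanceAs (Finite (_ → A))

def translateIndex (j : ℤ) (h : |j| + r ≤ R) (k : (Finset.Icc (-(r : ℤ)) r : Finset ℤ)) :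
    (Finset.Icc (-(R : ℤ)) R : Finset ℤ) :=
  ⟨j + k, by
    have hk := Finset.mem_Icc.mp k.2
    have hj := abs_le.mp (le_refl |j|)
    rw [Finset.mem_Icc]
    constructor <;> linarith⟩

theorem translateIndex_injective (j : ℤ) (h : |j| + r ≤ R) : (translateIndex j h).Injective :=
  fun _ _ hkk' => Subtype.ext (add_left_cancel (congrArg Subtype.val hkk'))

def Word.subword (j : ℤ) (h : |j| + r ≤ R) (w : Word A R) : Word A r :=
  fun k => w (translateIndex j h k)

theorem Word.apply_add_eq_subword {x : ℤ → A} {w : Word A R}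
    (hx : ∀ k : (Finset.Icc (-(R : ℤ)) R : Finset ℤ), x k = w k) (j : ℤ) (h : |j| + r ≤ R)
    (k : (Finset.Icc (-(r : ℤ)) r : Finset ℤ)) : x (j + k) = w.subword j h k :=
  hx (translateIndex j h k)

theorem ncard_preimage_subword [Fintype A] (j : ℤ) (h : |j| + r ≤ R) (S : Set (Word A r)) :
    (Word.subword j h ⁻¹' S).ncard = S.ncard * Fintype.card A ^ (2 * (R - r)) := by
  have := Set.ncard_preimage_comp_of_injective (α := A) (translateIndex_injective j h) S
  rw [card_coe_Icc_neg_self, card_coe_Icc_neg_self] at this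
  rw [← show 2 * R + 1 - (2 * r + 1) = 2 * (R - r) by have := abs_nonneg j; omega]
  exact this

noncomputable def Word.extend [Nonempty A] (w : Word A R) : ℤ → A := fun m =>
  if h : m ∈ Finset.Icc (-(R : ℤ)) R then w ⟨m, h⟩ else Classical.arbitrary A

theorem Word.extend_apply [Nonempty A] (w : Word A R) (k : (Finset.Icc (-(R : ℤ)) R : Finset ℤ)) :
    w.extend k = w k :=
  dif_pos k.2

end Words

section DiffSet

variable {A : Type} {re r R : ℕ} {e c d : (ℤ → A) → (ℤ → A)}

theorem HasRadius.mem_diffSet_iff (hc : HasRadius r c) (hd : HasRadius r d) {w : Word A r}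
    {x : ℤ → A} (hx : ∀ k : (Finset.Icc (-(r : ℤ)) r : Finset ℤ), x k = w k) :
    w ∈ diffSet r c d ↔ c x 0 ≠ d x 0 := by
  refine ⟨fun ⟨y, hy, hne⟩ => ?_, fun hne => ⟨x, hx, hne⟩⟩
  have hxy : ∀ j : ℤ, |j| ≤ (r : ℤ) → x j = y j := fun j hj => by
    have hk : j ∈ Finset.Icc (-(r : ℤ)) r := Finset.mem_Icc.mpr (abs_le.mp hj)
    rw [hx ⟨j, hk⟩, hy ⟨j, hk⟩]
  rwa [hc.apply_zero_congr hxy, hd.apply_zero_congr hxy]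

theorem diffSet_eq_preimage_of_le [Nonempty A] (hrR : r ≤ R) (hc : HasRadius r c)
    (hd : HasRadius r d) :
    diffSet R c d = Word.subword 0 (by simpa using hrR) ⁻¹' diffSet r c d := by
  ext w
  rw [Set.mem_preimage, (hc.mono hrR).mem_diffSet_iff (hd.mono hrR) w.extend_apply,
    hc.mem_diffSet_iff hd (x := fun m => w.extend (0 + m))
      (Word.apply_add_eq_subword w.extend_apply 0 _),
    hc.apply_translate_zero, hd.apply_translate_zero]

theorem deltaR_eq_of_le [Fintype A] [Nonempty A] (hrR : r ≤ R) (hc : HasRadius r c)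
    (hd : HasRadius r d) : deltaR R c d = deltaR r c d := by
  have hq : (0 : ℝ) < Fintype.card A := by exact_mod_cast Fintype.card_pos
  rw [deltaR, deltaR, diffSet_eq_preimage_of_le hrR hc hd, ncard_preimage_subword,
    show 2 * R + 1 = 2 * (R - r) + (2 * r + 1) by omega, pow_add]
  push_cast
  field_simp

theorem delta_eq_deltaR [Fintype A] [Nonempty A] (hc : HasRadius R c) (hd : HasRadius R d) :
    delta c d = deltaR R c d :=
  (deltaR_eq_of_le (max_le hc.rad_le hd.rad_le)
    ((IsCA.hasRadius_rad ⟨R, hc⟩).mono (le_max_left _ _))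
    ((IsCA.hasRadius_rad ⟨R, hd⟩).mono (le_max_right _ _))).symm

theorem deltaR_of_isEmpty [Fintype A] [IsEmpty A] : deltaR r c d = 0 := by
  simp [deltaR]

theorem abs_add_le_add_of_mem_Icc {j : ℤ} (hj : j ∈ Finset.Icc (-(re : ℤ)) re) :
    |j| + r ≤ (re + r : ℕ) := by
  push_cast
  linarith [abs_le.mpr (Finset.mem_Icc.mp hj)]

theorem diffSet_comp_subset (he : HasRadius re e) (hc : HasRadius r c) (hd : HasRadius r d) :
    diffSet (re + r) (e ∘ c) (e ∘ d) ⊆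
      ⋃ j : (Finset.Icc (-(re : ℤ)) re : Finset ℤ),
        Word.subword j (abs_add_le_add_of_mem_Icc j.2) ⁻¹' diffSet r c d := by
  rintro u ⟨x, hx, hne⟩
  obtain ⟨j, hj, hcd⟩ : ∃ j : ℤ, |j| ≤ (re : ℤ) ∧ c x j ≠ d x j := by
    by_contra! h
    exact hne (he.apply_zero_congr h)
  have hj' : j ∈ Finset.Icc (-(re : ℤ)) re := Finset.mem_Icc.mpr (abs_le.mp hj)
  refine Set.mem_iUnion.mpr ⟨⟨j, hj'⟩, fun m => x (j + m), Word.apply_add_eq_subword hx j _, ?_⟩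
  rwa [hc.apply_translate_zero, hd.apply_translate_zero]

theorem ncard_diffSet_comp_le [Fintype A] (he : HasRadius re e) (hc : HasRadius r c)
    (hd : HasRadius r d) :
    (diffSet (re + r) (e ∘ c) (e ∘ d)).ncard ≤
      (2 * re + 1) * ((diffSet r c d).ncard * Fintype.card A ^ (2 * re)) :=
  calc (diffSet (re + r) (e ∘ c) (e ∘ d)).ncard
      ≤ ∑ j : (Finset.Icc (-(re : ℤ)) re : Finset ℤ),
          (Word.subword j (abs_add_le_add_of_mem_Icc j.2) ⁻¹' diffSet r c d).ncard :=
        (Set.ncard_le_ncard (diffSet_comp_subset he hc hd)).trans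
          (Set.ncard_iUnion_le_of_fintype _)
    _ = (2 * re + 1) * ((diffSet r c d).ncard * Fintype.card A ^ (2 * re)) := by
        simp only [ncard_preimage_subword, Nat.add_sub_cancel, Finset.sum_const,
          Finset.card_univ, card_coe_Icc_neg_self, smul_eq_mul]

theorem deltaR_comp_le [Fintype A] [Nonempty A] (he : HasRadius re e) (hc : HasRadius r c)
    (hd : HasRadius r d) :
    deltaR (re + r) (e ∘ c) (e ∘ d) ≤ (2 * re + 1) * deltaR r c d := by
  have hq : (0 : ℝ) < Fintype.card A := by exact_mod_cast Fintype.card_pos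
  calc deltaR (re + r) (e ∘ c) (e ∘ d)
      ≤ ((2 * re + 1) * ((diffSet r c d).ncard * Fintype.card A ^ (2 * re)) : ℕ) /
          (Fintype.card A : ℝ) ^ (2 * (re + r) + 1) :=
        div_le_div_of_nonneg_right (by exact_mod_cast ncard_diffSet_comp_le he hc hd)
          (by positivity)
    _ = (2 * re + 1) * deltaR r c d := by
        rw [deltaR, show 2 * (re + r) + 1 = 2 * re + (2 * r + 1) by ring, pow_add]
        push_cast
        field_simp

end DiffSet

theorem stmt2_general {A : Type} [Fintype A]
    (e : (ℤ → A) → (ℤ → A)) (he : IsCA e) :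
    ∀ c d : (ℤ → A) → (ℤ → A), IsCA c → IsCA d →
      delta (e ∘ c) (e ∘ d) ≤ (2 * (rad e : ℝ) + 1) * delta c d := by
  intro c d hc hd
  cases isEmpty_or_nonempty A
  · simp [delta, deltaR_of_isEmpty]
  have hcr : HasRadius (max (rad c) (rad d)) c := hc.hasRadius_rad.mono (le_max_left _ _)
  have hdr : HasRadius (max (rad c) (rad d)) d := hd.hasRadius_rad.mono (le_max_right _ _)
  rw [delta_eq_deltaR (he.hasRadius_rad.comp hcr) (he.hasRadius_rad.comp hdr)]
  exact deltaR_comp_le he.hasRadius_rad hcr hdr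

/-- left composition is Lipschitz:
`δ(e ∘ c, e ∘ d) ≤ (2 r(e) + 1) δ(c, d)`. -/
theorem stmt2 {A : Type} [Fintype A] (hA : 2 ≤ Fintype.card A)
    (e : (ℤ → A) → (ℤ → A)) (he : IsCA e) :
    ∀ c d : (ℤ → A) → (ℤ → A), IsCA c → IsCA d →
      delta (e ∘ c) (e ∘ d) ≤ (2 * (rad e : ℝ) + 1) * delta c d :=
  stmt2_general e he
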